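/- In the group algebra k[C_{n+1}], with t = (−1)^n c, the k-linear map ε' : k[C_{n+1}] → k defined by ε'(Σ_{i=0}^n x_i c^i) = Σ_{i=0}^n (−1)^{ni} x_{n−i} (indices taken in {0,…,n}) is surjective, and its kernel is exactly the image of the k-linear map x ↦ x(1 − t). -/

import Mathlib

universe u

/-- The fixed generator `c` of the cyclic group `C_{n+1}` of order `n+1`
(realized as `Multiplicative (ZMod (n+1))`), viewed in the group algebra `k[C_{n+1}]`. -/
noncomputable def cycGen (k : Type u) [CommRing k] (n : ℕ) :
    MonoidAlgebra k (Multiplicative (ZMod (n + 1))) :=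
  MonoidAlgebra.of k (Multiplicative (ZMod (n + 1))) (Multiplicative.ofAdd (1 : ZMod (n + 1)))

/-- The element `t = (-1)^n c` of the group algebra `k[C_{n+1}]`. -/
noncomputable def tEl (k : Type u) [CommRing k] (n : ℕ) :
    MonoidAlgebra k (Multiplicative (ZMod (n + 1))) :=
  ((-1 : k) ^ n) • cycGen k n

/-- The norm element `N = ∑_{i=0}^{n} tⁱ` of the group algebra `k[C_{n+1}]`. -/
noncomputable def NEl (k : Type u) [CommRing k] (n : ℕ) :
    MonoidAlgebra k (Multiplicative (ZMod (n + 1))) :=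
  ∑ i ∈ Finset.range (n + 1), (tEl k n) ^ i

/-- The `k`-linear map `ε' : k[C_{n+1}] → k` defined by
`ε'(∑_{i=0}^n xᵢ cⁱ) = ∑_{i=0}^n (-1)^{n i} x_{n-i}` (indices taken in `{0, …, n}`). -/
noncomputable def epsPrime (k : Type u) [CommRing k] (n : ℕ) :
    MonoidAlgebra k (Multiplicative (ZMod (n + 1))) →ₗ[k] k :=
  ∑ i ∈ Finset.range (n + 1),
    ((-1 : k) ^ (n * i)) • ((Finsupp.lapply (Multiplicative.ofAdd (((n - i : ℕ) : ZMod (n + 1))))).comp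
      (MonoidAlgebra.coeffLinearEquiv k : MonoidAlgebra k (Multiplicative (ZMod (n + 1))) ≃ₗ[k] _).toLinearMap)

/-!
Since `t ^ (n + 1) = 1`, the norm element `N = ∑ tⁱ` satisfies `N (1 - t) = 0`, and `ε'(x)` is the
coefficient of `cⁿ` in `x N`. Hence `ε'` kills `x (1 - t)`, and `ε'(tʲ) = ε'(1) = (-1)^{n²}` for all `j`.
As each `cʲ` is `±tʲ` and `tʲ - 1 = -(1 + t + ⋯ + t^{j-1}) (1 - t)`, every `x` is congruent to
`(-1)^{n²} ε'(x)` modulo the image of `1 - t`, which gives the kernel.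
-/

lemma neg_one_pow_pow_mul_self {R : Type*} [Monoid R] [HasDistribNeg R] (m j : ℕ) :
    ((-1 : R) ^ m) ^ j * ((-1) ^ m) ^ j = 1 := by
  rw [← pow_add, ← pow_mul, ((Even.add_self j).mul_left m).neg_one_pow]

lemma pow_sub_one_mem_range_mulRight {R A : Type*} [CommSemiring R] [Ring A] [Algebra R A]
    (a : A) (j : ℕ) : a ^ j - 1 ∈ LinearMap.range (LinearMap.mulRight R (1 - a)) :=
  ⟨-∑ i ∈ Finset.range j, a ^ i, by rw [LinearMap.mulRight_apply, neg_mul, geom_sum_mul_neg, neg_sub]⟩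

section CyclicGroupAlgebra

open MonoidAlgebra

variable {k : Type u} [CommRing k] {n : ℕ}

lemma cycGen_pow (j : ℕ) :
    cycGen k n ^ j = of k _ (Multiplicative.ofAdd (j : ZMod (n + 1))) := by
  rw [cycGen, ← map_pow, ← ofAdd_nsmul, nsmul_one]

lemma tEl_pow (j : ℕ) :
    tEl k n ^ j = single (Multiplicative.ofAdd (j : ZMod (n + 1))) (((-1 : k) ^ n) ^ j) := by
  rw [tEl, smul_pow, cycGen_pow, of_apply, smul_single', mul_one]

lemma tEl_pow_succ_self : tEl k n ^ (n + 1) = 1 := by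
  rw [tEl_pow, ZMod.natCast_self, ofAdd_zero, ← pow_mul, (Nat.even_mul_succ_self n).neg_one_pow,
    one_def]

lemma single_eq_smul_tEl_pow (j : ℕ) (r : k) :
    single (Multiplicative.ofAdd (j : ZMod (n + 1))) r =
      (((-1 : k) ^ n) ^ j * r) • tEl k n ^ j := by
  rw [tEl_pow, smul_single', mul_right_comm, neg_one_pow_pow_mul_self, one_mul]

lemma NEl_mul_one_sub_tEl : NEl k n * (1 - tEl k n) = 0 := by
  rw [NEl, geom_sum_mul_neg, tEl_pow_succ_self, sub_self]

lemma NEl_mul_tEl_pow (j : ℕ) : NEl k n * tEl k n ^ j = NEl k n := by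
  have hN : NEl k n * tEl k n = NEl k n :=
    (sub_eq_zero.mp ((mul_one_sub _ _).symm.trans NEl_mul_one_sub_tEl)).symm
  induction j with
  | zero => rw [pow_zero, mul_one]
  | succ j ih => rw [pow_succ, ← mul_assoc, ih, hN]

lemma coeff_NEl_ofAdd_natCast_self :
    (NEl k n).coeff (Multiplicative.ofAdd (n : ZMod (n + 1))) = ((-1 : k) ^ n) ^ n := by
  simp only [NEl, coeff_sum, Finsupp.finsetSum_apply, tEl_pow, coeff_single]
  refine (Finset.sum_eq_single n (fun i hi hin => ?_) (by simp)).trans (by simp)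
  rw [Finset.mem_range] at hi
  refine Finsupp.single_eq_of_ne ?_
  rw [Ne, Multiplicative.ofAdd.injective.eq_iff, ZMod.natCast_eq_natCast_iff',
    Nat.mod_eq_of_lt hi, Nat.mod_eq_of_lt n.lt_succ_self]
  exact hin.symm

lemma epsPrime_eq_coeff_mul_NEl (x : MonoidAlgebra k (Multiplicative (ZMod (n + 1)))) :
    epsPrime k n x = (x * NEl k n).coeff (Multiplicative.ofAdd (n : ZMod (n + 1))) := by
  simp only [epsPrime, NEl, Finset.mul_sum, coeff_sum, LinearMap.sum_apply,
    Finsupp.finsetSum_apply, LinearMap.smul_apply, LinearMap.comp_apply, LinearEquiv.coe_coe,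
    coeffLinearEquiv_apply, Finsupp.lapply_apply, tEl_pow, coeff_mul_single_apply]
  refine Finset.sum_congr rfl fun i hi => ?_
  rw [Finset.mem_range] at hi
  rw [Nat.cast_sub (by omega), ofAdd_sub, div_eq_mul_inv, pow_mul, smul_eq_mul, mul_comm]

lemma epsPrime_mul_one_sub_tEl (x : MonoidAlgebra k (Multiplicative (ZMod (n + 1)))) :
    epsPrime k n (x * (1 - tEl k n)) = 0 := by
  rw [epsPrime_eq_coeff_mul_NEl, mul_assoc, mul_comm (1 - _), NEl_mul_one_sub_tEl, mul_zero,
    coeff_zero, Finsupp.coe_zero, Pi.zero_apply]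

lemma epsPrime_tEl_pow (j : ℕ) : epsPrime k n (tEl k n ^ j) = ((-1 : k) ^ n) ^ n := by
  rw [epsPrime_eq_coeff_mul_NEl, mul_comm, NEl_mul_tEl_pow, coeff_NEl_ofAdd_natCast_self]

lemma sub_epsPrime_smul_one_mem_range (x : MonoidAlgebra k (Multiplicative (ZMod (n + 1)))) :
    x - (((-1 : k) ^ n) ^ n * epsPrime k n x) • 1 ∈
      LinearMap.range (LinearMap.mulRight k (1 - tEl k n)) := by
  induction x using MonoidAlgebra.induction_linear with
  | zero => simp
  | add x y hx hy =>
    convert add_mem hx hy using 1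
    rw [map_add, mul_add, add_smul, add_sub_add_comm]
  | single g r =>
    obtain ⟨j, hj⟩ := ZMod.natCast_zmod_surjective (Multiplicative.toAdd g)
    rw [← ofAdd_toAdd g, ← hj, single_eq_smul_tEl_pow, map_smul, epsPrime_tEl_pow, smul_eq_mul]
    set c := ((-1 : k) ^ n) ^ j * r
    have hc : ((-1 : k) ^ n) ^ n * (c * ((-1 : k) ^ n) ^ n) = c := by
      linear_combination c * neg_one_pow_pow_mul_self (R := k) n n
    rw [hc, ← smul_sub]
    exact Submodule.smul_mem _ _ (pow_sub_one_mem_range_mulRight _ j)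

end CyclicGroupAlgebra

/-- The map `ε'` is surjective, and its kernel is exactly the image of right multiplication
by `1 - t`. -/
theorem epsPrime_surjective_ker_eq_range {k : Type u} [CommRing k] (n : ℕ) :
    Function.Surjective (epsPrime k n) ∧
      LinearMap.ker (epsPrime k n) =
        LinearMap.range (LinearMap.mulRight k (1 - tEl k n)) := by
  refine ⟨fun a => ⟨(((-1 : k) ^ n) ^ n * a) • 1, ?_⟩, le_antisymm (fun x hx => ?_) ?_⟩
  · rw [map_smul, ← pow_zero (tEl k n), epsPrime_tEl_pow, smul_eq_mul, mul_right_comm,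
      neg_one_pow_pow_mul_self, one_mul]
  · simpa [LinearMap.mem_ker.mp hx] using sub_epsPrime_smul_one_mem_range x
  · rintro _ ⟨y, rfl⟩
    exact epsPrime_mul_one_sub_tEl y
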